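/- Let V be a finite-dimensional real inner product space, F : V → ℝ convex and differentiable with L-Lipschitz continuous gradient, G : V → ℝ convex and continuous, E = F + G, and let u* be a minimizer of E. Fix τ ∈ (0, 1/L] and u^(0) ∈ V, and for n ≥ 0 define u^(n+1) as the minimizer over V of u ↦ F(u^(n)) + ⟨∇F(u^(n)), u − u^(n)⟩ + (1/(2τ))‖u − u^(n)‖² + G(u). Then for every n ≥ 1, E(u^(n)) − E(u*) ≤ ‖u^(0) − u*‖² / (2τn). -/

import Mathlib

/-!
The model minimised by a forward–backward step is `1/τ`-strongly convex, so its minimiser `u⁺`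
beats every `z` by `‖z - u⁺‖² / (2τ)`. The descent inequality (with `Lτ ≤ 1`) bounds `F u⁺` from
above by the model, and the gradient inequality of the convex `F` bounds the model at `z` by
`E z`. This gives `E u⁺ + ‖z - u⁺‖² / (2τ) ≤ E z + ‖z - u‖² / (2τ)` for every `z`: with `z = u`
the energies `E uⁿ` decrease, and with `z = u*` the distances telescope to
`n (E uⁿ - E u*) ≤ ‖u⁰ - u*‖² / (2τ)`.
-/

open RealInnerProductSpace

open Set Filter Topology

theorem StrongConvexOn.add_sq_norm_sub_le_of_isMinOn {E : Type*} [NormedAddCommGroup E]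
    [NormedSpace ℝ E] {s : Set E} {m : ℝ} {f : E → ℝ} {x z : E} (hf : StrongConvexOn s m f)
    (hmin : IsMinOn f s x) (hx : x ∈ s) (hz : z ∈ s) :
    f x + m / 2 * ‖z - x‖ ^ 2 ≤ f z := by
  obtain ⟨K, hK⟩ : ∃ K, K = m / 2 * ‖z - x‖ ^ 2 := ⟨_, rfl⟩
  rw [← hK]
  have hsegment : ∀ t ∈ Ioo (0 : ℝ) 1, f x + (1 - t) * K ≤ f z := by
    rintro t ⟨ht0, ht1⟩
    have hconv := hf.2 hx hz (sub_nonneg.2 ht1.le) ht0.le (sub_add_cancel 1 t)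
    have hle : f x ≤ f ((1 - t) • x + t • z) :=
      hmin (hf.1 hx hz (sub_nonneg.2 ht1.le) ht0.le (sub_add_cancel 1 t))
    rw [norm_sub_rev] at hconv
    simp only [smul_eq_mul, ← hK] at hconv
    refine le_of_mul_le_mul_left ?_ ht0
    linarith
  have hlim : Tendsto (fun t : ℝ => f x + (1 - t) * K) (𝓝[>] 0) (𝓝 (f x + (1 - 0) * K)) :=
    ((by fun_prop : Continuous fun t : ℝ => f x + (1 - t) * K).tendsto 0).mono_left
      nhdsWithin_le_nhds
  simpa using le_of_tendsto hlim (eventually_of_mem (Ioo_mem_nhdsGT one_pos) hsegment)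

theorem nat_mul_sub_le_of_add_le_add {e d : ℕ → ℝ} {a : ℝ} (he : Antitone e) (hd : ∀ n, 0 ≤ d n)
    (hstep : ∀ n, e (n + 1) + d (n + 1) ≤ a + d n) (n : ℕ) :
    n * (e n - a) ≤ d 0 := by
  suffices h : ∀ n : ℕ, n * (e n - a) + d n ≤ d 0 by linarith [h n, hd n]
  intro n
  induction n with
  | zero => simp
  | succ k ih =>
    have hmul : (k : ℝ) * (e (k + 1) - a) ≤ k * (e k - a) :=
      mul_le_mul_of_nonneg_left (sub_le_sub_right (he k.le_succ) a) k.cast_nonneg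
    push_cast
    linarith [hstep k]

section

variable {V : Type*} [NormedAddCommGroup V] [InnerProductSpace ℝ V]

theorem ConvexOn.add_inner_le_of_hasGradientAt [CompleteSpace V] {s : Set V} {f : V → ℝ}
    {f' x z : V} (hf : ConvexOn ℝ s f) (hx : x ∈ s) (hz : z ∈ s) (h : HasGradientAt f f' x) :
    f x + ⟪f', z - x⟫ ≤ f z := by
  have hline : ConvexOn ℝ (AffineMap.lineMap x z ⁻¹' s) (f ∘ AffineMap.lineMap (k := ℝ) x z) :=
    hf.comp_affineMap _
  have hderiv : HasDerivAt (f ∘ AffineMap.lineMap (k := ℝ) x z) ⟪f', z - x⟫ 0 := by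
    have hf0 : HasFDerivAt f (InnerProductSpace.toDual ℝ V f')
        (AffineMap.lineMap x z (0 : ℝ)) := by
      simpa only [AffineMap.lineMap_apply_zero] using h.hasFDerivAt
    simpa only [InnerProductSpace.toDual_apply_apply] using
      hf0.comp_hasDerivAt (0 : ℝ) AffineMap.hasDerivAt_lineMap
  have hslope := hline.le_slope_of_hasDerivAt (x := 0) (y := 1) (by simpa) (by simpa) one_pos hderiv
  simp only [slope_def_field, Function.comp_apply, AffineMap.lineMap_apply_zero,
    AffineMap.lineMap_apply_one, sub_zero, div_one] at hslope
  linarith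

theorem convexOn_inner_sub {s : Set V} (hs : Convex ℝ s) (p w : V) :
    ConvexOn ℝ s fun y => ⟪p, y - w⟫ :=
  (((innerₗ V p).convexOn hs).add_const (-⟪p, w⟫)).congr fun y _ => by
    simp [← sub_eq_add_neg, inner_sub_right]

theorem ConvexOn.strongConvexOn_add_mul_sq_norm_sub {s : Set V} {h : V → ℝ}
    (hh : ConvexOn ℝ s h) (c : ℝ) (w : V) :
    StrongConvexOn s (2 * c) fun y => h y + c * ‖y - w‖ ^ 2 := by
  rw [strongConvexOn_iff_convex]
  refine ((hh.add (convexOn_inner_sub hh.1 ((-2 * c) • w) w)).add_const (-(c * ‖w‖ ^ 2))).congr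
    fun y _ => ?_
  simp only [Pi.add_apply, norm_sub_sq_real, inner_sub_right, real_inner_smul_left,
    real_inner_self_eq_norm_sq, real_inner_comm w y]
  ring

noncomputable def forwardBackwardModel (F : V → ℝ) (F' : V → V) (G : V → ℝ) (τ : ℝ) (x y : V) :
    ℝ :=
  F x + ⟪F' x, y - x⟫ + (1 / (2 * τ)) * ‖y - x‖ ^ 2 + G y

theorem strongConvexOn_forwardBackwardModel {G : V → ℝ} (hG : ConvexOn ℝ univ G)
    (F : V → ℝ) (F' : V → V) (τ : ℝ) (x : V) :
    StrongConvexOn univ (2 * (1 / (2 * τ))) (forwardBackwardModel F F' G τ x) := by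
  have hlin : ConvexOn ℝ univ fun y => F x + ⟪F' x, y - x⟫ + G y :=
    ((convexOn_const (F x) convex_univ).add (convexOn_inner_sub convex_univ (F' x) x)).add hG
  convert hlin.strongConvexOn_add_mul_sq_norm_sub (1 / (2 * τ)) x using 1
  funext y
  simp only [forwardBackwardModel]
  ring

theorem add_sq_norm_sub_le_of_forwardBackward_step [CompleteSpace V] {F G : V → ℝ}
    {F' : V → V} {L τ : ℝ} {x x' : V} (hF : ConvexOn ℝ univ F) (hgrad : HasGradientAt F (F' x) x)
    (hsmooth : F x' ≤ F x + ⟪F' x, x' - x⟫ + L / 2 * ‖x' - x‖ ^ 2) (hG : ConvexOn ℝ univ G)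
    (hτ : 0 < τ) (hLτ : L * τ ≤ 1)
    (hmin : ∀ z, forwardBackwardModel F F' G τ x x' ≤ forwardBackwardModel F F' G τ x z) (z : V) :
    F x' + G x' + 1 / (2 * τ) * ‖z - x'‖ ^ 2 ≤ F z + G z + 1 / (2 * τ) * ‖z - x‖ ^ 2 := by
  have hgrowth := (strongConvexOn_forwardBackwardModel hG F F' τ x).add_sq_norm_sub_le_of_isMinOn
    (isMinOn_univ_iff.2 hmin) (mem_univ x') (mem_univ z)
  have hlower := hF.add_inner_le_of_hasGradientAt (mem_univ x) (mem_univ z) hgrad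
  have hstep : L / 2 * ‖x' - x‖ ^ 2 ≤ 1 / (2 * τ) * ‖x' - x‖ ^ 2 := by
    refine mul_le_mul_of_nonneg_right ?_ (sq_nonneg _)
    rw [div_le_div_iff₀ two_pos (by positivity)]
    linarith
  rw [forwardBackwardModel, forwardBackwardModel, mul_div_cancel_left₀ _ two_ne_zero] at hgrowth
  linarith

end

theorem forward_backward_convergence_general
    {V : Type*} [NormedAddCommGroup V] [InnerProductSpace ℝ V] [FiniteDimensional ℝ V]
    (F : V → ℝ) (F' : V → V) (L : ℝ)
    (hFconv : ConvexOn ℝ Set.univ F)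
    (hgrad : ∀ x : V, HasGradientAt F (F' x) x)
    (hsmooth : ∀ u v : V, F u ≤ F v + ⟪F' v, u - v⟫ + (L / 2) * ‖u - v‖ ^ 2)
    (G : V → ℝ) (hGconv : ConvexOn ℝ Set.univ G)
    (E : V → ℝ) (hE : ∀ x, E x = F x + G x)
    (ustar : V)
    (τ : ℝ) (hτ0 : 0 < τ) (hτL : τ ≤ 1 / L)
    (u : ℕ → V)
    (hupd : ∀ n : ℕ, ∀ z : V,
      F (u n) + ⟪F' (u n), u (n + 1) - u n⟫ + (1 / (2 * τ)) * ‖u (n + 1) - u n‖ ^ 2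
          + G (u (n + 1)) ≤
        F (u n) + ⟪F' (u n), z - u n⟫ + (1 / (2 * τ)) * ‖z - u n‖ ^ 2 + G z) :
    ∀ n : ℕ, 1 ≤ n →
      E (u n) - E ustar ≤ ‖u 0 - ustar‖ ^ 2 / (2 * τ * (n : ℝ)) := by
  intro n hn
  have hn' : (0 : ℝ) < n := by exact_mod_cast hn
  have hLτ : L * τ ≤ 1 := by
    rwa [le_div_iff₀ (one_div_pos.mp (hτ0.trans_le hτL)), mul_comm] at hτL
  have hstep (k : ℕ) (z : V) :
      E (u (k + 1)) + 1 / (2 * τ) * ‖z - u (k + 1)‖ ^ 2 ≤ E z + 1 / (2 * τ) * ‖z - u k‖ ^ 2 := by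
    rw [hE, hE]
    exact add_sq_norm_sub_le_of_forwardBackward_step hFconv (hgrad _) (hsmooth _ _) hGconv hτ0 hLτ
      (hupd k) z
  have hdecr : Antitone (E ∘ u) := antitone_nat_of_succ_le fun k => by
    simpa using (le_add_of_nonneg_right (by positivity)).trans (hstep k (u k))
  have hrate := nat_mul_sub_le_of_add_le_add hdecr
    (d := fun k => 1 / (2 * τ) * ‖ustar - u k‖ ^ 2) (fun k => by positivity) (hstep · ustar) n
  rw [le_div_iff₀ (by positivity), norm_sub_rev]
  simp only [Function.comp_apply] at hrate
  field_simp at hrate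
  linarith

/-- Forward-backward splitting convergence: for a convex `F` with `L`-Lipschitz gradient
and a convex continuous `G`, with step size `τ ∈ (0, 1/L]`, the iterates satisfy
`E(uⁿ) − E(u*) ≤ ‖u⁰ − u*‖² / (2τn)` for all `n ≥ 1`. -/
theorem forward_backward_convergence
    {V : Type*} [NormedAddCommGroup V] [InnerProductSpace ℝ V] [FiniteDimensional ℝ V]
    (F : V → ℝ) (F' : V → V) (L : ℝ) (hL : 0 < L)
    (hFconv : ConvexOn ℝ Set.univ F)
    (hgrad : ∀ x : V, HasGradientAt F (F' x) x)
    (hsmooth : ∀ u v : V, F u ≤ F v + ⟪F' v, u - v⟫ + (L / 2) * ‖u - v‖ ^ 2)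
    (G : V → ℝ) (hGconv : ConvexOn ℝ Set.univ G) (hGcont : Continuous G)
    (E : V → ℝ) (hE : ∀ x, E x = F x + G x)
    (ustar : V) (hustar : ∀ x, E ustar ≤ E x)
    (τ : ℝ) (hτ0 : 0 < τ) (hτL : τ ≤ 1 / L)
    (u : ℕ → V)
    (hupd : ∀ n : ℕ, ∀ z : V,
      F (u n) + ⟪F' (u n), u (n + 1) - u n⟫ + (1 / (2 * τ)) * ‖u (n + 1) - u n‖ ^ 2
          + G (u (n + 1)) ≤
        F (u n) + ⟪F' (u n), z - u n⟫ + (1 / (2 * τ)) * ‖z - u n‖ ^ 2 + G z) :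
    ∀ n : ℕ, 1 ≤ n →
      E (u n) - E ustar ≤ ‖u 0 - ustar‖ ^ 2 / (2 * τ * (n : ℝ)) :=
  forward_backward_convergence_general F F' L hFconv hgrad hsmooth G hGconv E hE ustar τ hτ0 hτL u
    hupd
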